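/- With the notation below, the following identities hold in p_m: [X_{αi}, X_{βω}] = 0 for 1 ≤ i ≤ n−1; [X_{ij}, X_{βω}] = 0 for 1 ≤ i < j ≤ n; for all 1 ≤ i ≤ n−1 and 1 ≤ k ≤ n, [X_{αi}, X_{kβ}] = −δ_{ik}[X_{αβ}, X_{kβ}]; and for all 1 ≤ i < j ≤ n and 1 ≤ k ≤ n, [X_{ij}, X_{kβ}] = −[δ_{ik} X_{jβ} + δ_{jk} X_{iβ}, X_{kβ}]. Consequently, the adjoint action of the Lie subalgebra s(p_{m−1}) on the Lie subalgebra f_{m−2} generated by X_{1β},…,X_{nβ}, X_{βω} is by tangential derivations (each generator X_{kβ} is sent to a bracket [X_{kβ}, v] with v ∈ f_{m−2}), and X_{βω} is annihilated by this action. -/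

import Mathlib

open scoped BigOperators

/-- The set of strand labels `S = {α, 1, …, n, β, ω}`. -/
inductive Strand (n : ℕ) : Type
  | alpha : Strand n
  | num : Fin n → Strand n
  | beta : Strand n
  | omega : Strand n
  deriving DecidableEq

instance (n : ℕ) : Fintype (Strand n) := by
  classical
  exact Fintype.ofSurjective
    (fun s : Option (Option (Option (Fin n))) =>
      match s with
      | none => Strand.alpha
      | some none => Strand.beta
      | some (some none) => Strand.omega
      | some (some (some i)) => Strand.num i)
    (by rintro (_ | i | _ | _)
        · exact ⟨none, rfl⟩
        · exact ⟨some (some (some i)), rfl⟩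
        · exact ⟨some none, rfl⟩
        · exact ⟨some (some none), rfl⟩)

/-- The free Lie algebra on the generators `X_{ab}`, `a, b ∈ S`. -/
abbrev FL (n : ℕ) : Type := FreeLieAlgebra ℂ (Strand n × Strand n)

/-- The generator `X_{ab}` of the free Lie algebra. -/
noncomputable def XF (n : ℕ) (a b : Strand n) : FL n := FreeLieAlgebra.of ℂ (a, b)

/-- The defining relations of `p_m`: the generators `X_{aa}` (we present `p_m` using
generators indexed by all ordered pairs, so the diagonal generators are set to zero),
the symmetry relations `X_{ab} = X_{ba}`, the linear relations `Σ_{b ≠ a} X_{ab} = 0`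
and the commutation relations `[X_{ab}, X_{cd}] = 0` for `a, b, c, d` pairwise distinct. -/
noncomputable def pmRel (n : ℕ) : Set (FL n) :=
  {w | ∃ a, w = XF n a a} ∪
  {w | ∃ a b, w = XF n a b - XF n b a} ∪
  {w | ∃ a, w = ∑ b ∈ Finset.univ.filter (fun b => b ≠ a), XF n a b} ∪
  {w | ∃ a b c d, a ≠ b ∧ a ≠ c ∧ a ≠ d ∧ b ≠ c ∧ b ≠ d ∧ c ≠ d ∧
    w = ⁅XF n a b, XF n c d⁆}

noncomputable def pmIdeal (n : ℕ) : LieIdeal ℂ (FL n) :=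
  LieSubmodule.lieSpan ℂ (FL n) (pmRel n)

/-- The Lie algebra `p_m` of infinitesimal spherical pure braids, `m = n + 3`. -/
abbrev P (n : ℕ) : Type := FL n ⧸ pmIdeal n

/-- The image `X_{ab}` of a generator in `p_m`. -/
noncomputable def X (n : ℕ) (a b : Strand n) : P n :=
  LieSubmodule.Quotient.mk (N := pmIdeal n) (XF n a b)

/-- `X_{βω} := Σ_{i=1}^n X_{αi} + Σ_{1≤i<j≤n} X_{ij}`. -/
noncomputable def Xbw (n : ℕ) : P n :=
  (∑ i : Fin n, X n Strand.alpha (Strand.num i)) +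
    ∑ i : Fin n, ∑ j : Fin n, if i < j then X n (Strand.num i) (Strand.num j) else 0

/-- The Lie subalgebra `f_{m−2}` of `p_m`, generated by `X_{1β}, …, X_{nβ}, X_{βω}`. -/
noncomputable def fSub (n : ℕ) : LieSubalgebra ℂ (P n) :=
  LieSubalgebra.lieSpan ℂ (P n)
    ({w | ∃ i : Fin n, w = X n (Strand.num i) Strand.beta} ∪ {Xbw n})

/-- The Lie subalgebra `s(p_{m−1})` of `p_m`, generated by the `X_{αi}` (`1 ≤ i ≤ n−1`)
and the `X_{ij}` (`1 ≤ i < j ≤ n`). -/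
noncomputable def sSub (n : ℕ) : LieSubalgebra ℂ (P n) :=
  LieSubalgebra.lieSpan ℂ (P n)
    ({w | ∃ i : Fin n, (i : ℕ) + 1 < n ∧ w = X n Strand.alpha (Strand.num i)} ∪
     {w | ∃ i j : Fin n, i < j ∧ w = X n (Strand.num i) (Strand.num j)})

abbrev UP (n : ℕ) : Type := UniversalEnvelopingAlgebra ℂ (P n)

attribute [local instance 100] LieRing.ofAssociativeRing

noncomputable def ιP (n : ℕ) : P n →ₗ⁅ℂ⁆ UP n := UniversalEnvelopingAlgebra.ι ℂ

/-- The subalgebra `U f_{m−2} ⊆ U p_m`, generated by the image of `f_{m−2}`. -/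
noncomputable def UfSub (n : ℕ) : Subalgebra ℂ (UP n) :=
  Algebra.adjoin ℂ (ιP n '' (fSub n : Set (P n)))

/-!
All the identities come from two consequences of the defining relations. Bracketing the relation
`Σ_d X_{ad} = 0` with `X_{bc}` kills every term but two and gives the four-term relation
`[X_{ab} + X_{ac}, X_{bc}] = 0`. Summing the relations `Σ_b X_{ab} = 0` over `a ∈ {β, ω}` and over
its complement shows that `X_{βω}` as defined equals the generator `X_{βω}`, which commutes with
every `X_{αi}` and `X_{ij}`. The elements normalizing `f_{m−2}` that act on each `X_{kβ}` as
`[X_{kβ}, v]` with `v ∈ f_{m−2}` form a Lie subalgebra, so it suffices to check the generators of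
`s(p_{m−1})`.
-/

namespace LieSubalgebra

variable {R L : Type*} [CommRing R] [LieRing L] [LieAlgebra R L] {s : Set L}

theorem lie_eq_zero_of_mem_lieSpan {x w : L} (h : ∀ y ∈ s, ⁅y, x⁆ = 0)
    (hw : w ∈ lieSpan R L s) : ⁅w, x⁆ = 0 := by
  induction hw using lieSpan_induction with
  | mem y hy => exact h y hy
  | zero => exact zero_lie x
  | add y z _ _ hy hz => rw [add_lie, hy, hz, add_zero]
  | smul a y _ hy => rw [smul_lie, hy, smul_zero]
  | lie y z _ _ hy hz => rw [lie_lie, hy, hz, lie_zero, lie_zero, sub_zero]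

theorem mem_normalizer_lieSpan {w : L} (h : ∀ y ∈ s, ⁅w, y⁆ ∈ lieSpan R L s) :
    w ∈ (lieSpan R L s).normalizer := by
  refine (mem_normalizer_iff _ w).mpr fun y hy => ?_
  induction hy using lieSpan_induction with
  | mem y hy => exact h y hy
  | zero => rw [lie_zero]; exact zero_mem _
  | add y z _ _ hy hz => rw [lie_add]; exact add_mem hy hz
  | smul a y _ hy => rw [lie_smul]; exact LieSubalgebra.smul_mem _ a hy
  | lie y z hy hz ihy ihz =>
    rw [leibniz_lie]
    exact add_mem (lie_mem _ ihy hz) (lie_mem _ hy ihz)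

def tangentialNormalizer {ι : Type*} (K : LieSubalgebra R L) (y : ι → L) :
    LieSubalgebra R L where
  carrier := {w | w ∈ K.normalizer ∧ ∀ i, ∃ v ∈ K, ⁅w, y i⁆ = ⁅y i, v⁆}
  zero_mem' := ⟨zero_mem _, fun _ => ⟨0, zero_mem _, by rw [zero_lie, lie_zero]⟩⟩
  add_mem' := fun {a b} ⟨ha, hta⟩ ⟨hb, htb⟩ => ⟨add_mem ha hb, fun i => by
    obtain ⟨u, hu, eu⟩ := hta i
    obtain ⟨v, hv, ev⟩ := htb i
    exact ⟨u + v, add_mem hu hv, by rw [add_lie, eu, ev, lie_add]⟩⟩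
  smul_mem' := fun c a ⟨ha, hta⟩ => ⟨LieSubalgebra.smul_mem _ c ha, fun i => by
    obtain ⟨u, hu, eu⟩ := hta i
    exact ⟨c • u, K.smul_mem c hu, by rw [smul_lie, eu, lie_smul]⟩⟩
  lie_mem' := fun {a b} ⟨ha, hta⟩ ⟨hb, htb⟩ => ⟨lie_mem _ ha hb, fun i => by
    obtain ⟨u, hu, eu⟩ := hta i
    obtain ⟨v, hv, ev⟩ := htb i
    rw [mem_normalizer_iff] at ha hb
    -- By the Jacobi identity, `⁅a, b⁆` sends `y i` to `⁅y i, ⁅u, v⁆ + ⁅a, v⁆ - ⁅b, u⁆⁆`.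
    refine ⟨⁅u, v⁆ + ⁅a, v⁆ - ⁅b, u⁆,
      sub_mem (add_mem (lie_mem _ hu hv) (ha v hv)) (hb u hu), ?_⟩
    rw [lie_lie, eu, ev, leibniz_lie a, leibniz_lie b, eu, ev, lie_sub, lie_add,
      leibniz_lie (y i) u v, ← lie_skew (⁅y i, v⁆) u]
    abel⟩

end LieSubalgebra

theorem Finset.sum_sum_eq_sum_sum_compl {S M : Type*} [Fintype S] [DecidableEq S]
    [AddCommGroup M] {f : S → S → M} (hsymm : ∀ a b, f a b = f b a)
    (hrow : ∀ a, ∑ b, f a b = 0) (A : Finset S) :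
    ∑ a ∈ A, ∑ b ∈ A, f a b = ∑ a ∈ Aᶜ, ∑ b ∈ Aᶜ, f a b := by
  have hA : ∑ a ∈ A, ∑ b ∈ A, f a b + ∑ a ∈ A, ∑ b ∈ Aᶜ, f a b = 0 := by
    rw [← sum_add_distrib]
    exact sum_eq_zero fun a _ => by rw [sum_add_sum_compl, hrow]
  have hAc : ∑ a ∈ Aᶜ, ∑ b ∈ Aᶜ, f a b + ∑ a ∈ Aᶜ, ∑ b ∈ A, f a b = 0 := by
    rw [← sum_add_distrib]
    exact sum_eq_zero fun a _ => by rw [sum_compl_add_sum, hrow]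
  have hcross : ∑ a ∈ A, ∑ b ∈ Aᶜ, f a b = ∑ a ∈ Aᶜ, ∑ b ∈ A, f a b := by
    rw [sum_comm]
    exact sum_congr rfl fun a _ => sum_congr rfl fun b _ => hsymm b a
  rw [hcross] at hA
  exact add_right_cancel (hA.trans hAc.symm)

theorem Finset.sum_sum_eq_two_nsmul_sum_sum_lt {ι M : Type*} [Fintype ι] [LinearOrder ι]
    [AddCommMonoid M] {f : ι → ι → M} (hsymm : ∀ i j, f i j = f j i) (hdiag : ∀ i, f i i = 0) :
    ∑ i, ∑ j, f i j = 2 • ∑ i, ∑ j, if i < j then f i j else 0 := by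
  have hsplit : ∀ i j, f i j = (if i < j then f i j else 0) + if j < i then f j i else 0 := by
    intro i j
    rcases lt_trichotomy i j with h | rfl | h
    · rw [if_pos h, if_neg h.not_gt, add_zero]
    · simp only [lt_irrefl, if_false, add_zero, hdiag]
    · rw [if_neg h.not_gt, if_pos h, zero_add, hsymm]
  rw [sum_congr rfl fun i _ => sum_congr rfl fun j _ => hsplit i j]
  simp only [sum_add_distrib]
  rw [sum_comm (f := fun i j => if j < i then f j i else 0), two_nsmul]

namespace Strand

variable {n : ℕ}

theorem compl_beta_omega :
    ({beta, omega} : Finset (Strand n))ᶜ = insert alpha (Finset.univ.image num) := by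
  ext s
  cases s <;> simp

theorem sum_univ {M : Type*} [AddCommMonoid M] (f : Strand n → M) :
    ∑ s, f s = f alpha + f beta + f omega + ∑ i, f (num i) := by
  rw [← Finset.sum_add_sum_compl {beta, omega}, compl_beta_omega, Finset.sum_pair (by simp),
    Finset.sum_insert (by simp), Finset.sum_image fun _ _ _ _ h => num.inj h]
  abel

end Strand

section Relations

open Strand

variable {n : ℕ}

theorem mk_eq_zero_of_mem_pmRel {w : FL n} (h : w ∈ pmRel n) :
    LieSubmodule.Quotient.mk' (pmIdeal n) w = 0 :=
  LieSubmodule.Quotient.mk_eq_zero'.mpr (LieSubmodule.subset_lieSpan h)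

theorem X_self (a : Strand n) : X n a a = 0 :=
  mk_eq_zero_of_mem_pmRel (Or.inl (Or.inl (Or.inl ⟨a, rfl⟩)))

theorem X_symm (a b : Strand n) : X n a b = X n b a :=
  sub_eq_zero.mp <| (map_sub (LieSubmodule.Quotient.mk' (pmIdeal n)) _ _).symm.trans
    (mk_eq_zero_of_mem_pmRel (Or.inl (Or.inl (Or.inr ⟨a, b, rfl⟩))))

theorem sum_X_eq_zero (a : Strand n) : ∑ b, X n a b = 0 := by
  rw [← Finset.sum_erase _ (X_self a), ← Finset.filter_ne']
  exact (map_sum (LieSubmodule.Quotient.mk' (pmIdeal n)) _ _).symm.trans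
    (mk_eq_zero_of_mem_pmRel (Or.inl (Or.inr ⟨a, rfl⟩)))

theorem lie_X_X_eq_zero {a b c d : Strand n} (hab : a ≠ b) (hac : a ≠ c) (had : a ≠ d)
    (hbc : b ≠ c) (hbd : b ≠ d) (hcd : c ≠ d) : ⁅X n a b, X n c d⁆ = 0 :=
  (LieSubmodule.Quotient.mk_bracket _ _ _).symm.trans
    (mk_eq_zero_of_mem_pmRel (Or.inr ⟨a, b, c, d, hab, hac, had, hbc, hbd, hcd, rfl⟩))

theorem X_alpha_beta_eq : X n alpha beta = -X n beta omega - ∑ i, X n (num i) beta := by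
  have h := sum_X_eq_zero (n := n) beta
  rw [sum_univ, X_self, X_symm beta alpha] at h
  simp only [X_symm beta (num _)] at h
  linear_combination (norm := module) h

theorem Xbw_eq_X_beta_omega : Xbw n = X n beta omega := by
  have h := Finset.sum_sum_eq_sum_sum_compl (X_symm (n := n)) sum_X_eq_zero {beta, omega}
  rw [compl_beta_omega] at h
  simp only [Finset.sum_insert (show alpha ∉ Finset.univ.image num by simp),
    Finset.sum_image fun _ _ _ _ h => num.inj h, Finset.sum_pair (show beta ≠ omega by simp),
    Finset.sum_add_distrib, X_self, X_symm omega beta, X_symm (num _) alpha] at h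
  rw [Finset.sum_sum_eq_two_nsmul_sum_sum_lt (fun i j => X_symm _ _) fun i => X_self _] at h
  have h2 : (2 : ℂ) • Xbw n = (2 : ℂ) • X n beta omega := by
    unfold Xbw
    linear_combination (norm := module) -h
  exact smul_right_injective (P n) two_ne_zero h2

theorem lie_X_add_X_X_eq_zero {a b c : Strand n} (hab : a ≠ b) (hac : a ≠ c) (hbc : b ≠ c) :
    ⁅X n a b + X n a c, X n b c⁆ = 0 := by
  have hrow : ∑ d, ⁅X n b c, X n a d⁆ = 0 := by
    rw [← lie_sum, sum_X_eq_zero, lie_zero]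
  have hother : ∀ d, d ≠ b ∧ d ≠ c → ⁅X n b c, X n a d⁆ = 0 := fun d ⟨hdb, hdc⟩ => by
    by_cases hda : d = a
    · rw [hda, X_self, lie_zero]
    · exact lie_X_X_eq_zero hbc hab.symm (Ne.symm hdb) hac.symm (Ne.symm hdc) (Ne.symm hda)
  rw [Fintype.sum_eq_add b c hbc hother] at hrow
  rw [add_lie, ← lie_skew, ← lie_skew (X n a c), ← neg_add, hrow, neg_zero]

theorem lie_X_X_eq_neg_lie_X_X {a b c : Strand n} (hab : a ≠ b) (hac : a ≠ c) (hbc : b ≠ c) :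
    ⁅X n a b, X n b c⁆ = -⁅X n a c, X n b c⁆ :=
  eq_neg_of_add_eq_zero_left ((add_lie _ _ _).symm.trans (lie_X_add_X_X_eq_zero hab hac hbc))

theorem lie_X_alpha_num_X_num_beta (i k : Fin n) :
    ⁅X n alpha (num i), X n (num k) beta⁆ =
      -((if i = k then (1 : ℂ) else 0) • ⁅X n alpha beta, X n (num k) beta⁆) := by
  split_ifs with hik
  · rw [hik, one_smul]
    exact lie_X_X_eq_neg_lie_X_X (by simp) (by simp) (by simp)
  · rw [zero_smul, neg_zero]
    exact lie_X_X_eq_zero (by simp) (by simp) (by simp) (by simpa using hik) (by simp) (by simp)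

theorem lie_X_num_num_X_num_beta {i j : Fin n} (hij : i ≠ j) (k : Fin n) :
    ⁅X n (num i) (num j), X n (num k) beta⁆ =
      -⁅(if i = k then (1 : ℂ) else 0) • X n (num j) beta +
          (if j = k then (1 : ℂ) else 0) • X n (num i) beta, X n (num k) beta⁆ := by
  by_cases hik : i = k
  · subst hik
    rw [if_pos rfl, if_neg hij.symm, one_smul, zero_smul, add_zero, X_symm]
    exact lie_X_X_eq_neg_lie_X_X (by simpa using hij.symm) (by simp) (by simp)
  by_cases hjk : j = k
  · subst hjk
    rw [if_neg hij, if_pos rfl, one_smul, zero_smul, zero_add]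
    exact lie_X_X_eq_neg_lie_X_X (by simpa using hij) (by simp) (by simp)
  rw [if_neg hik, if_neg hjk, zero_smul, zero_smul, add_zero, zero_lie, neg_zero]
  exact lie_X_X_eq_zero (by simpa using hij) (by simpa using hik) (by simp) (by simpa using hjk)
    (by simp) (by simp)

theorem lie_X_alpha_num_Xbw (i : Fin n) : ⁅X n alpha (num i), Xbw n⁆ = 0 := by
  rw [Xbw_eq_X_beta_omega]
  exact lie_X_X_eq_zero (by simp) (by simp) (by simp) (by simp) (by simp) (by simp)

theorem lie_X_num_num_Xbw {i j : Fin n} (hij : i ≠ j) : ⁅X n (num i) (num j), Xbw n⁆ = 0 := by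
  rw [Xbw_eq_X_beta_omega]
  exact lie_X_X_eq_zero (by simpa using hij) (by simp) (by simp) (by simp) (by simp) (by simp)

theorem X_num_beta_mem_fSub (k : Fin n) : X n (num k) beta ∈ fSub n :=
  LieSubalgebra.subset_lieSpan (Or.inl ⟨k, rfl⟩)

theorem Xbw_mem_fSub : Xbw n ∈ fSub n :=
  LieSubalgebra.subset_lieSpan (Or.inr rfl)

theorem X_alpha_beta_mem_fSub : X n alpha beta ∈ fSub n := by
  rw [X_alpha_beta_eq, ← Xbw_eq_X_beta_omega]
  exact sub_mem (neg_mem Xbw_mem_fSub) (sum_mem fun k _ => X_num_beta_mem_fSub k)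

theorem mem_tangentialNormalizer_fSub {w : P n} (hXbw : ⁅w, Xbw n⁆ = 0)
    (hX : ∀ k, ∃ v ∈ fSub n, ⁅w, X n (num k) beta⁆ = -⁅v, X n (num k) beta⁆) :
    w ∈ (fSub n).tangentialNormalizer fun k => X n (num k) beta := by
  refine ⟨LieSubalgebra.mem_normalizer_lieSpan ?_, fun k => ?_⟩
  · rintro y (⟨k, rfl⟩ | rfl)
    · obtain ⟨v, hv, e⟩ := hX k
      rw [e]
      exact neg_mem (LieSubalgebra.lie_mem _ hv (X_num_beta_mem_fSub k))
    · rw [hXbw]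
      exact zero_mem _
  · obtain ⟨v, hv, e⟩ := hX k
    exact ⟨v, hv, e.trans (lie_skew _ _)⟩

theorem sSub_le_tangentialNormalizer_fSub :
    sSub n ≤ (fSub n).tangentialNormalizer fun k => X n (num k) beta := by
  refine LieSubalgebra.lieSpan_le.mpr ?_
  rintro w (⟨i, -, rfl⟩ | ⟨i, j, hij, rfl⟩)
  · refine mem_tangentialNormalizer_fSub (lie_X_alpha_num_Xbw i) fun k => ?_
    exact ⟨_, (fSub n).smul_mem _ X_alpha_beta_mem_fSub,
      (lie_X_alpha_num_X_num_beta i k).trans (by rw [smul_lie])⟩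
  · refine mem_tangentialNormalizer_fSub (lie_X_num_num_Xbw hij.ne) fun k => ?_
    exact ⟨_, add_mem ((fSub n).smul_mem _ (X_num_beta_mem_fSub j))
      ((fSub n).smul_mem _ (X_num_beta_mem_fSub i)), lie_X_num_num_X_num_beta hij.ne k⟩

end Relations

theorem tangential_action_general (n : ℕ) :
    -- `[X_{αi}, X_{βω}] = 0` for `1 ≤ i ≤ n−1`
    (∀ i : Fin n, (i : ℕ) + 1 < n →
      ⁅X n Strand.alpha (Strand.num i), Xbw n⁆ = 0) ∧
    -- `[X_{ij}, X_{βω}] = 0` for `1 ≤ i < j ≤ n`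
    (∀ i j : Fin n, i < j →
      ⁅X n (Strand.num i) (Strand.num j), Xbw n⁆ = 0) ∧
    -- `[X_{αi}, X_{kβ}] = −δ_{ik} [X_{αβ}, X_{kβ}]`
    (∀ i k : Fin n, (i : ℕ) + 1 < n →
      ⁅X n Strand.alpha (Strand.num i), X n (Strand.num k) Strand.beta⁆ =
        -((if i = k then (1 : ℂ) else 0) •
          ⁅X n Strand.alpha Strand.beta, X n (Strand.num k) Strand.beta⁆)) ∧
    -- `[X_{ij}, X_{kβ}] = −[δ_{ik} X_{jβ} + δ_{jk} X_{iβ}, X_{kβ}]`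
    (∀ i j k : Fin n, i < j →
      ⁅X n (Strand.num i) (Strand.num j), X n (Strand.num k) Strand.beta⁆ =
        -⁅(if i = k then (1 : ℂ) else 0) • X n (Strand.num j) Strand.beta +
            (if j = k then (1 : ℂ) else 0) • X n (Strand.num i) Strand.beta,
          X n (Strand.num k) Strand.beta⁆) ∧
    -- `X_{βω}` is annihilated by the adjoint action of `s(p_{m−1})`
    (∀ w ∈ sSub n, ⁅w, Xbw n⁆ = 0) ∧
    -- the adjoint action of `s(p_{m−1})` is tangential: each generator `X_{kβ}` is sent
    -- to a bracket `[X_{kβ}, v]` with `v ∈ f_{m−2}`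
    (∀ w ∈ sSub n, ∀ k : Fin n,
      ∃ v ∈ fSub n,
        ⁅w, X n (Strand.num k) Strand.beta⁆ = ⁅X n (Strand.num k) Strand.beta, v⁆) := by
  refine ⟨fun i _ => lie_X_alpha_num_Xbw i, fun i j hij => lie_X_num_num_Xbw hij.ne,
    fun i k _ => lie_X_alpha_num_X_num_beta i k,
    fun i j k hij => lie_X_num_num_X_num_beta hij.ne k,
    fun w hw => LieSubalgebra.lie_eq_zero_of_mem_lieSpan ?_ hw,
    fun w hw => (sSub_le_tangentialNormalizer_fSub hw).2⟩
  rintro y (⟨i, -, rfl⟩ | ⟨i, j, hij, rfl⟩)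
  · exact lie_X_alpha_num_Xbw i
  · exact lie_X_num_num_Xbw hij.ne

/-- The bracket identities in `p_m` expressing that the adjoint action of `s(p_{m−1})` on
`f_{m−2}` is by tangential derivations, annihilating `X_{βω}`. -/
theorem tangential_action (n : ℕ) (hn : 1 ≤ n) :
    -- `[X_{αi}, X_{βω}] = 0` for `1 ≤ i ≤ n−1`
    (∀ i : Fin n, (i : ℕ) + 1 < n →
      ⁅X n Strand.alpha (Strand.num i), Xbw n⁆ = 0) ∧
    -- `[X_{ij}, X_{βω}] = 0` for `1 ≤ i < j ≤ n`
    (∀ i j : Fin n, i < j →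
      ⁅X n (Strand.num i) (Strand.num j), Xbw n⁆ = 0) ∧
    -- `[X_{αi}, X_{kβ}] = −δ_{ik} [X_{αβ}, X_{kβ}]`
    (∀ i k : Fin n, (i : ℕ) + 1 < n →
      ⁅X n Strand.alpha (Strand.num i), X n (Strand.num k) Strand.beta⁆ =
        -((if i = k then (1 : ℂ) else 0) •
          ⁅X n Strand.alpha Strand.beta, X n (Strand.num k) Strand.beta⁆)) ∧
    -- `[X_{ij}, X_{kβ}] = −[δ_{ik} X_{jβ} + δ_{jk} X_{iβ}, X_{kβ}]`
    (∀ i j k : Fin n, i < j →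
      ⁅X n (Strand.num i) (Strand.num j), X n (Strand.num k) Strand.beta⁆ =
        -⁅(if i = k then (1 : ℂ) else 0) • X n (Strand.num j) Strand.beta +
            (if j = k then (1 : ℂ) else 0) • X n (Strand.num i) Strand.beta,
          X n (Strand.num k) Strand.beta⁆) ∧
    -- `X_{βω}` is annihilated by the adjoint action of `s(p_{m−1})`
    (∀ w ∈ sSub n, ⁅w, Xbw n⁆ = 0) ∧
    -- the adjoint action of `s(p_{m−1})` is tangential: each generator `X_{kβ}` is sent
    -- to a bracket `[X_{kβ}, v]` with `v ∈ f_{m−2}`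
    (∀ w ∈ sSub n, ∀ k : Fin n,
      ∃ v ∈ fSub n,
        ⁅w, X n (Strand.num k) Strand.beta⁆ = ⁅X n (Strand.num k) Strand.beta, v⁆) :=
  tangential_action_general n
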